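/- arXiv:1810.01634 — 6 statements merged into one kernel-verified Lean document; each statement's English description precedes it below -/
import Mathlib

section
/- Let a, b, c be elements of ℤ[α] with integer coefficient vectors (a_0,…,a_{m−1}), (b_0,…,b_{m−1}), (c_0,…,c_{m−1}) such that c = a·b, i.e. Σ_{l=0}^{m−1} c_l α^l = (Σ_{i=0}^{m−1} a_i α^i)·(Σ_{j=0}^{m−1} b_j α^j). Then opc(a·b) ≤ m(1+‖f‖_∞)^{m−1}·opc(a)·opc(b), i.e. max_l |c_l| ≤ m(1+‖f‖_∞)^{m−1}·(max_i |a_i|)·(max_j |b_j|). -/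
/-!
Multiplying by `α` and eliminating `α ^ m` once via `f(α) = 0` turns a coefficient vector
bounded by `K` into one bounded by `(1 + ‖f‖_∞) K`: each new entry is a shifted old entry minus
the old top entry times a coefficient of `f`. So the reduced representative of `α ^ j a` has
coefficients at most `(1 + ‖f‖_∞) ^ j opc(a)`, and `a b = ∑_j b_j α ^ j a`. As `f` is the minimal
polynomial of `α`, representatives of degree `< m` are unique, so every coefficient of `a b` is a
sum of `m` terms, each at most `opc(b) (1 + ‖f‖_∞) ^ (m - 1) opc(a)`.
-/

open Polynomial Finset

/-- `opc a` is the maximum of the absolute values of the integer coefficients of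
an element of `ℤ[α]` represented by its coefficient vector `a`. -/
def opc {m : ℕ} (a : Fin m → ℤ) : ℤ :=
  ((Finset.univ.sup fun i => (a i).natAbs : ℕ) : ℤ)

/-- `fninf m f = ‖f‖_∞`, the maximum absolute value of the coefficients
`f_0, …, f_{m-1}` of `f`. -/
def fninf (m : ℕ) (f : Polynomial ℤ) : ℤ :=
  ((Finset.univ.sup fun i : Fin m => (f.coeff (i : ℕ)).natAbs : ℕ) : ℤ)

namespace Polynomial

section Reduction

variable {R : Type*} [CommRing R]

/-- Multiplication by `X` followed by one reduction step modulo `f`; for monic `f` and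
`p.degree < f.natDegree` this is `(p * X) %ₘ f`. -/
noncomputable def mulXModByMonic (f p : R[X]) : R[X] :=
  p * X - C (p.coeff (f.natDegree - 1)) * f

variable {f p : R[X]}

theorem coeff_mulXModByMonic (i : ℕ) :
    (mulXModByMonic f p).coeff i
      = (p * X).coeff i - p.coeff (f.natDegree - 1) * f.coeff i := by
  rw [mulXModByMonic, coeff_sub, coeff_C_mul]

theorem degree_mulXModByMonic_lt (hf : f.Monic) (hp : p.degree < f.natDegree) :
    (mulXModByMonic f p).degree < f.natDegree := by
  rw [degree_lt_iff_coeff_zero] at hp ⊢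
  intro i hi
  rw [coeff_mulXModByMonic]
  obtain rfl | hlt := hi.eq_or_lt
  · obtain h0 | hpos := Nat.eq_zero_or_pos f.natDegree
    · simp [hp 0 (by omega), h0]
    · obtain ⟨k, hk⟩ := Nat.exists_eq_add_one_of_ne_zero hpos.ne'
      rw [hk, coeff_mul_X, Nat.add_sub_cancel, ← hk, hf.coeff_natDegree, mul_one, sub_self]
  · obtain ⟨k, rfl⟩ : ∃ k, i = k + 1 := ⟨i - 1, by omega⟩
    rw [coeff_mul_X, hp k (by omega), coeff_eq_zero_of_natDegree_lt hlt, mul_zero, sub_zero]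

theorem aeval_mulXModByMonic {A : Type*} [CommRing A] [Algebra R A] {x : A}
    (hx : aeval x f = 0) : aeval x (mulXModByMonic f p) = aeval x p * x := by
  simp [mulXModByMonic, hx]

theorem degree_iterate_mulXModByMonic_lt (hf : f.Monic) (hp : p.degree < f.natDegree) (j : ℕ) :
    ((mulXModByMonic f)^[j] p).degree < f.natDegree := by
  induction j with
  | zero => exact hp
  | succ j ih =>
    rw [Function.iterate_succ_apply']
    exact degree_mulXModByMonic_lt hf ih

theorem aeval_iterate_mulXModByMonic {A : Type*} [CommRing A] [Algebra R A] {x : A}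
    (hx : aeval x f = 0) (j : ℕ) : aeval x ((mulXModByMonic f)^[j] p) = aeval x p * x ^ j := by
  induction j with
  | zero => simp
  | succ j ih => rw [Function.iterate_succ_apply', aeval_mulXModByMonic hx, ih, pow_succ, mul_assoc]

end Reduction

section Bounds

variable {R : Type*} [CommRing R] [LinearOrder R] [IsStrictOrderedRing R] {f p : R[X]} {F K : R}

theorem abs_coeff_mulXModByMonic_le (hf : f.Monic) (hF : 0 ≤ F)
    (hfF : ∀ i < f.natDegree, |f.coeff i| ≤ F) (hp : p.degree < f.natDegree)
    (hpK : ∀ i, |p.coeff i| ≤ K) (i : ℕ) : |(mulXModByMonic f p).coeff i| ≤ (1 + F) * K := by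
  have hK : 0 ≤ K := (abs_nonneg _).trans (hpK 0)
  obtain hi | hi := lt_or_ge i f.natDegree
  · have hshift : |(p * X).coeff i| ≤ K := by
      cases i with
      | zero => simpa using hK
      | succ k => rw [coeff_mul_X]; exact hpK k
    have hred : |p.coeff (f.natDegree - 1) * f.coeff i| ≤ K * F := by
      rw [abs_mul]; exact mul_le_mul (hpK _) (hfF i hi) (abs_nonneg _) hK
    rw [coeff_mulXModByMonic]
    linarith [abs_sub ((p * X).coeff i) (p.coeff (f.natDegree - 1) * f.coeff i)]
  · rw [coeff_eq_zero_of_degree_lt ((degree_mulXModByMonic_lt hf hp).trans_le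
      (by exact_mod_cast hi)), abs_zero]
    positivity

theorem abs_coeff_iterate_mulXModByMonic_le (hf : f.Monic) (hF : 0 ≤ F)
    (hfF : ∀ i < f.natDegree, |f.coeff i| ≤ F) (hp : p.degree < f.natDegree)
    (hpK : ∀ i, |p.coeff i| ≤ K) (j i : ℕ) :
    |((mulXModByMonic f)^[j] p).coeff i| ≤ (1 + F) ^ j * K := by
  induction j generalizing i with
  | zero => simpa using hpK i
  | succ j ih =>
    rw [Function.iterate_succ_apply', pow_succ', mul_assoc]
    exact abs_coeff_mulXModByMonic_le hf hF hfF (degree_iterate_mulXModByMonic_lt hf hp j) ih i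

end Bounds

theorem eq_zero_of_aeval_eq_zero_of_degree_lt {A : Type*} [CommRing A] [Nontrivial A]
    [Algebra ℚ A] {f D : ℤ[X]} (hf : f.Monic) (hirr : Irreducible (f.map (Int.castRingHom ℚ)))
    {x : A} (hx : aeval x f = 0) (hD : D.degree < f.natDegree) (hDx : aeval x D = 0) :
    D = 0 := by
  by_contra hne
  have aeval_map (p : ℤ[X]) : aeval x (p.map (Int.castRingHom ℚ)) = aeval x p := by
    rw [← algebraMap_int_eq, aeval_map_algebraMap]
  have hminpoly := minpoly.eq_of_irreducible_of_monic hirr (by rw [aeval_map, hx]) (hf.map _)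
  have hle := minpoly.degree_le_of_ne_zero ℚ x
    ((Polynomial.map_ne_zero_iff (Int.castRingHom ℚ).injective_int).mpr hne)
    (by rw [aeval_map, hDx])
  rw [← hminpoly, hf.degree_map, degree_eq_natDegree hf.ne_zero] at hle
  exact (degree_map_le.trans_lt hD).not_ge hle

theorem aeval_ofFn {R A : Type*} [CommRing R] [DecidableEq R] [CommRing A] [Algebra R A]
    {n : ℕ} (v : Fin n → R) (x : A) :
    aeval x (ofFn n v) = ∑ i, algebraMap R A (v i) * x ^ (i : ℕ) := by
  simp [ofFn_eq_sum_monomial, aeval_monomial]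

theorem ofFn_eq_sum_mul_iterate_mulXModByMonic {A : Type*} [CommRing A] [Nontrivial A]
    [Algebra ℚ A] {f : ℤ[X]} (hf : f.Monic) (hirr : Irreducible (f.map (Int.castRingHom ℚ)))
    {x : A} (hx : aeval x f = 0) (a b c : Fin f.natDegree → ℤ)
    (hc : aeval x (ofFn _ c) = aeval x (ofFn _ a) * aeval x (ofFn _ b)) :
    ofFn _ c = ∑ j, C (b j) * (mulXModByMonic f)^[j] (ofFn _ a) := by
  rw [← sub_eq_zero]
  refine eq_zero_of_aeval_eq_zero_of_degree_lt hf hirr hx ?_ ?_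
  · rw [← mem_degreeLT]
    refine Submodule.sub_mem _ (mem_degreeLT.mpr (ofFn_degree_lt c))
      (Submodule.sum_mem _ fun j _ => ?_)
    rw [C_mul']
    exact Submodule.smul_mem _ _
      (mem_degreeLT.mpr (degree_iterate_mulXModByMonic_lt hf (ofFn_degree_lt a) j))
  · simp only [map_sub, map_sum, map_mul, aeval_C, aeval_iterate_mulXModByMonic hx, hc,
      aeval_ofFn b, Finset.mul_sum]
    rw [sub_eq_zero]
    exact sum_congr rfl fun j _ => by ring

end Polynomial

section Norms

variable {m : ℕ}

theorem opc_nonneg (a : Fin m → ℤ) : 0 ≤ opc a := Int.natCast_nonneg _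

theorem abs_le_opc (a : Fin m → ℤ) (i : Fin m) : |a i| ≤ opc a := by
  rw [Int.abs_eq_natAbs, opc]
  exact_mod_cast Finset.le_sup (f := fun i => (a i).natAbs) (mem_univ i)

theorem opc_le_of_forall_abs_le {a : Fin m → ℤ} {B : ℤ} (hB : 0 ≤ B) (h : ∀ i, |a i| ≤ B) :
    opc a ≤ B := by
  lift B to ℕ using hB
  rw [opc, Nat.cast_le]
  refine Finset.sup_le fun i _ => ?_
  have hi := h i
  rw [Int.abs_eq_natAbs] at hi
  exact_mod_cast hi

theorem abs_coeff_ofFn_le_opc (a : Fin m → ℤ) (i : ℕ) : |(ofFn m a).coeff i| ≤ opc a := by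
  obtain hi | hi := lt_or_ge i m
  · rw [ofFn_coeff_eq_val_of_lt a hi]
    exact abs_le_opc a _
  · rw [ofFn_coeff_eq_zero_of_ge a hi, abs_zero]
    exact opc_nonneg a

theorem fninf_nonneg (f : ℤ[X]) : 0 ≤ fninf m f := Int.natCast_nonneg _

theorem abs_coeff_le_fninf (f : ℤ[X]) {i : ℕ} (hi : i < m) : |f.coeff i| ≤ fninf m f := by
  rw [Int.abs_eq_natAbs, fninf]
  exact_mod_cast Finset.le_sup (f := fun i : Fin m => (f.coeff i).natAbs) (mem_univ ⟨i, hi⟩)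

end Norms

theorem stmt_0_general (m : ℕ) (f : Polynomial ℤ)
    (hmonic : f.Monic) (hdeg : f.natDegree = m)
    (hirr : Irreducible (f.map (Int.castRingHom ℚ)))
    (α : ℝ) (hroot : Polynomial.aeval α f = 0)
    (a b c : Fin m → ℤ)
    (hc : (∑ l, (c l : ℝ) * α ^ (l : ℕ)) =
        (∑ i, (a i : ℝ) * α ^ (i : ℕ)) * ∑ j, (b j : ℝ) * α ^ (j : ℕ)) :
    opc c ≤ (m : ℤ) * (1 + fninf m f) ^ (m - 1) * opc a * opc b := by
  subst hdeg
  set P := fun j : ℕ => (mulXModByMonic f)^[j] (ofFn _ a)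
  have hrepr : ofFn _ c = ∑ j, C (b j) * P j :=
    ofFn_eq_sum_mul_iterate_mulXModByMonic hmonic hirr hroot a b c
      (by simpa [aeval_ofFn] using hc)
  have hF := fninf_nonneg (m := f.natDegree) f
  have hP (j : Fin f.natDegree) (l : ℕ) :
      |(P j).coeff l| ≤ (1 + fninf _ f) ^ (f.natDegree - 1) * opc a :=
    (abs_coeff_iterate_mulXModByMonic_le hmonic hF (fun _ => abs_coeff_le_fninf f)
      (ofFn_degree_lt a) (abs_coeff_ofFn_le_opc a) j l).trans
      (by gcongr; exacts [opc_nonneg a, by linarith, by omega])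
  refine opc_le_of_forall_abs_le (mul_nonneg (mul_nonneg (by positivity) (opc_nonneg a))
    (opc_nonneg b)) fun l => ?_
  calc |c l| = |∑ j, b j * (P j).coeff l| := by
        rw [← ofFn_coeff_eq_val_of_lt c l.isLt, hrepr, finsetSum_coeff]
        simp only [coeff_C_mul]
    _ ≤ ∑ j, |b j| * |(P j).coeff l| :=
        (abs_sum_le_sum_abs _ _).trans_eq (by simp only [abs_mul])
    _ ≤ ∑ _j : Fin f.natDegree, opc b * ((1 + fninf _ f) ^ (f.natDegree - 1) * opc a) :=
        sum_le_sum fun j _ => mul_le_mul (abs_le_opc b j) (hP j l) (abs_nonneg _) (opc_nonneg b)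
    _ = _ := by simp only [sum_const, card_univ, Fintype.card_fin, nsmul_eq_mul]; ring

theorem stmt_0 (m : ℕ) (hm : 1 ≤ m) (f : Polynomial ℤ)
    (hmonic : f.Monic) (hdeg : f.natDegree = m)
    (hirr : Irreducible (f.map (Int.castRingHom ℚ)))
    (α : ℝ) (hroot : Polynomial.aeval α f = 0)
    (a b c : Fin m → ℤ)
    (hc : (∑ l, (c l : ℝ) * α ^ (l : ℕ)) =
        (∑ i, (a i : ℝ) * α ^ (i : ℕ)) * ∑ j, (b j : ℝ) * α ^ (j : ℕ)) :
    opc c ≤ (m : ℤ) * (1 + fninf m f) ^ (m - 1) * opc a * opc b :=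
  stmt_0_general m f hmonic hdeg hirr α hroot a b c hc
end

section
/- Let b = g(α) be a nonzero element of ℤ[α], where g is a polynomial with integer coefficients of degree less than m, and let N(b) := ∏_β g(β), the product taken over all m complex roots β of f (the norm of b, which is a rational integer). Then |N(b)| ≤ m^{m/2}·‖f‖₂^{m−1}·opc(b)^m. -/
open Polynomial Finset

/-- The Euclidean norm of the coefficient vector `(p_0, …, p_{d-1})` of a polynomial. -/
noncomputable def normTwo (d : ℕ) (p : Polynomial ℤ) : ℝ :=
  Real.sqrt (∑ i ∈ Finset.range d, ((p.coeff i : ℝ)) ^ 2)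

/-- `opc` of the element `g(α)` of `ℤ[α]`: the maximum absolute value of the
coefficients `g_0, …, g_{m-1}` of `g` (here `deg g < m`). -/
def opcPoly (m : ℕ) (g : Polynomial ℤ) : ℤ :=
  ((Finset.univ.sup fun i : Fin m => (g.coeff (i : ℕ)).natAbs : ℕ) : ℤ)

/-!
For monic `f` of degree `m` and `deg g ≤ m - 1`, the norm `∏ g(β)` is the resultant
`Res(f, g)`, the determinant of the Sylvester matrix of format `(m, m - 1)`. By Hadamard's
inequality this determinant is at most the product of the Euclidean norms of its columns:
`m` columns holding the coefficients of `g`, each of norm at most `√m · opc(g)`, and `m - 1`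
columns holding the coefficients of `f`, each of norm `‖f‖₂`.
-/

theorem Matrix.abs_det_le_prod_sqrt_sum_sq_col {N : ℕ} (A : Matrix (Fin N) (Fin N) ℝ) :
    |A.det| ≤ ∏ j, √(∑ i, A i j ^ 2) := by
  have : Fact (Module.finrank ℝ (EuclideanSpace ℝ (Fin N)) = N) := ⟨finrank_euclideanSpace_fin⟩
  let b := EuclideanSpace.basisFun (Fin N) ℝ
  let v : Fin N → EuclideanSpace ℝ (Fin N) := fun j => WithLp.toLp 2 (fun i => A i j)
  have hdet : b.toBasis.det v = A.det := by
    rw [Module.Basis.det_apply]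
    rfl
  calc |A.det| = |b.toBasis.orientation.volumeForm v| := by
        rw [b.toBasis.orientation.volumeForm_robust' b, hdet]
    _ ≤ ∏ j, ‖v j‖ := b.toBasis.orientation.abs_volumeForm_apply_le v
    _ = ∏ j, √(∑ i, A i j ^ 2) := by simp [v, EuclideanSpace.norm_eq]

theorem Polynomial.sum_sq_shifted_coeff (p : ℝ[X]) {N j d : ℕ} (h : j + d < N) :
    ∑ i : Fin N, (if (i : ℕ) ∈ Set.Icc j (j + d) then p.coeff (i - j) else 0) ^ 2 =
      ∑ k ∈ range (d + 1), p.coeff k ^ 2 := by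
  have hsub : Ico j (j + (d + 1)) ⊆ range N := fun i hi => by
    simp only [mem_Ico, mem_range] at hi ⊢
    omega
  rw [Fin.sum_univ_eq_sum_range
      (fun i => (if i ∈ Set.Icc j (j + d) then p.coeff (i - j) else 0) ^ 2),
    ← sum_subset hsub, sum_Ico_eq_sum_range, Nat.add_sub_cancel_left]
  · refine sum_congr rfl fun k hk => ?_
    rw [mem_range] at hk
    rw [if_pos (by simp only [Set.mem_Icc]; omega), Nat.add_sub_cancel_left]
  · intro i _ hi
    rw [if_neg (by simp only [Set.mem_Icc, mem_Ico] at hi ⊢; omega)]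
    simp

theorem Polynomial.abs_resultant_le (f g : ℝ[X]) (m n : ℕ) :
    |resultant f g m n| ≤
      √(∑ k ∈ range (n + 1), g.coeff k ^ 2) ^ m * √(∑ k ∈ range (m + 1), f.coeff k ^ 2) ^ n := by
  refine (Matrix.abs_det_le_prod_sqrt_sum_sq_col _).trans_eq ?_
  rw [Fin.prod_univ_add]
  congr 1
  · rw [← Fin.prod_const]
    refine prod_congr rfl fun j _ => ?_
    simp only [sylvester, Matrix.of_apply, Fin.addCases_left]
    rw [sum_sq_shifted_coeff g (by omega)]
  · rw [← Fin.prod_const]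
    refine prod_congr rfl fun j _ => ?_
    simp only [sylvester, Matrix.of_apply, Fin.addCases_right]
    rw [sum_sq_shifted_coeff f (by omega)]

theorem Polynomial.prod_roots_aeval_eq_resultant {R K : Type*} [CommRing R] [Field K]
    [IsAlgClosed K] [Algebra R K] {f : R[X]} (hf : f.Monic) (g : R[X]) {n : ℕ}
    (hg : g.natDegree ≤ n) :
    ((f.map (algebraMap R K)).roots.map fun β => aeval β g).prod =
      algebraMap R K (resultant f g f.natDegree n) := by
  rw [← resultant_map_map, ← hf.natDegree_map (algebraMap R K),
    resultant_eq_prod_eval _ _ _ (natDegree_map_le.trans hg) (IsAlgClosed.splits _),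
    (hf.map _).leadingCoeff, one_pow, one_mul]
  simp [eval_map_algebraMap]

theorem abs_coeff_le_opcPoly (g : ℤ[X]) {m k : ℕ} (hk : k < m) :
    |(g.coeff k : ℝ)| ≤ opcPoly m g := by
  rw [← Int.cast_abs, Int.abs_eq_natAbs, opcPoly, Int.cast_natCast, Int.cast_natCast, Nat.cast_le]
  exact le_sup (f := fun i : Fin m => (g.coeff (i : ℕ)).natAbs) (mem_univ ⟨k, hk⟩)

theorem sqrt_sum_sq_coeff_le_opcPoly (g : ℤ[X]) (m : ℕ) :
    √(∑ k ∈ range m, (g.coeff k : ℝ) ^ 2) ≤ √m * opcPoly m g := by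
  have hsum : ∑ k ∈ range m, (g.coeff k : ℝ) ^ 2 ≤ ∑ _k ∈ range m, (opcPoly m g : ℝ) ^ 2 :=
    sum_le_sum fun k hk => by
      rw [← sq_abs]
      exact pow_le_pow_left₀ (abs_nonneg _) (abs_coeff_le_opcPoly g (mem_range.mp hk)) 2
  rw [sum_const, card_range, nsmul_eq_mul] at hsum
  have hopc : (0 : ℝ) ≤ opcPoly m g := by simp [opcPoly]
  calc √(∑ k ∈ range m, (g.coeff k : ℝ) ^ 2) ≤ √(m * (opcPoly m g : ℝ) ^ 2) :=
        Real.sqrt_le_sqrt hsum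
    _ = √m * opcPoly m g := by rw [Real.sqrt_mul (Nat.cast_nonneg m), Real.sqrt_sq hopc]

theorem stmt_3_general (m : ℕ) (f : Polynomial ℤ)
    (hmonic : f.Monic) (hdeg : f.natDegree = m)
    (g : Polynomial ℤ) (hg : g.degree < m) :
    ‖((f.map (Int.castRingHom ℂ)).roots.map
        (fun β => Polynomial.aeval β g)).prod‖ ≤
      Real.sqrt m ^ m * normTwo (m + 1) f ^ (m - 1) * ((opcPoly m g : ℤ) : ℝ) ^ m := by
  have hgdeg : g.natDegree ≤ m - 1 := by
    rcases eq_or_ne g 0 with rfl | hg0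
    · simp
    · exact Nat.le_sub_one_of_lt ((natDegree_lt_iff_degree_lt hg0).mpr hg)
  have hres := prod_roots_aeval_eq_resultant (K := ℂ) hmonic g hgdeg
  rw [hdeg] at hres
  have hg_norm : √(∑ k ∈ range (m - 1 + 1), (g.coeff k : ℝ) ^ 2) ^ m ≤ (√m * opcPoly m g) ^ m := by
    rcases Nat.eq_zero_or_pos m with rfl | hm
    · simp
    · rw [Nat.sub_add_cancel hm]
      exact pow_le_pow_left₀ (Real.sqrt_nonneg _) (sqrt_sum_sq_coeff_le_opcPoly g m) m
  calc ‖((f.map (Int.castRingHom ℂ)).roots.map fun β => aeval β g).prod‖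
      = |resultant (f.map (Int.castRingHom ℝ)) (g.map (Int.castRingHom ℝ)) m (m - 1)| := by
        rw [show Int.castRingHom ℂ = algebraMap ℤ ℂ from rfl, hres, resultant_map_map,
          algebraMap_int_eq, eq_intCast, eq_intCast, Complex.norm_intCast]
    _ ≤ √(∑ k ∈ range (m - 1 + 1), (g.coeff k : ℝ) ^ 2) ^ m * normTwo (m + 1) f ^ (m - 1) := by
        simpa [normTwo] using abs_resultant_le (f.map (Int.castRingHom ℝ))
          (g.map (Int.castRingHom ℝ)) m (m - 1)
    _ ≤ (√m * opcPoly m g) ^ m * normTwo (m + 1) f ^ (m - 1) :=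
        mul_le_mul_of_nonneg_right hg_norm (pow_nonneg (Real.sqrt_nonneg _) _)
    _ = Real.sqrt m ^ m * normTwo (m + 1) f ^ (m - 1) * ((opcPoly m g : ℤ) : ℝ) ^ m := by ring

theorem stmt_3 (m : ℕ) (hm : 1 ≤ m) (f : Polynomial ℤ)
    (hmonic : f.Monic) (hdeg : f.natDegree = m)
    (hirr : Irreducible (f.map (Int.castRingHom ℚ)))
    (α : ℝ) (hroot : Polynomial.aeval α f = 0)
    (g : Polynomial ℤ) (hg : g.degree < m)
    (hb : Polynomial.aeval α g ≠ 0) :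
    ‖((f.map (Int.castRingHom ℂ)).roots.map
        (fun β => Polynomial.aeval β g)).prod‖ ≤
      Real.sqrt m ^ m * normTwo (m + 1) f ^ (m - 1) * ((opcPoly m g : ℤ) : ℝ) ^ m :=
  stmt_3_general m f hmonic hdeg g hg
end

section
/- Let b_1, …, b_n ∈ ℝ^n be linearly independent vectors with Gram–Schmidt orthogonalization b_1*, …, b_n* and Gram–Schmidt coefficients μ_{ij} = ⟨b_i, b_j*⟩/⟨b_j*, b_j*⟩. For 1 ≤ j < i ≤ n let d_j be the determinant of the j×j Gram matrix (⟨b_p, b_q⟩)_{1≤p,q≤j}, and let λ_{ij} be the determinant of the j×j matrix obtained from this Gram matrix by replacing its last column with the column (⟨b_1, b_i⟩, …, ⟨b_j, b_i⟩)ᵀ. Then μ_{ij} = λ_{ij}/d_j; equivalently, μ_{ij}·d_j = λ_{ij}. Consequently, if all coordinates of the b_i lie in a subring R of ℝ, then λ_{ij} ∈ R and d_j ∈ R. -/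
/-!
The vector `b i - ∑_{l ≤ j} μ i l • bstar l` is orthogonal to `b 0, …, b j`, so replacing `b i` by
this projection leaves the last column of `λ_ij` unchanged. The projection is `μ i j • b j` plus a
vector of `span (b l : l < j)`, because each `bstar l - b l` lies in `span (b m : m < l)`. The
determinant is linear in its last column and vanishes on that span (a repeated column), hence
`λ_ij = μ i j * d_j`. Both determinants are integer polynomials in the entries `⟨b p, b q⟩`, which
gives the integrality statement.
-/

open Finset Matrix

structure IsGramSchmidt {ι κ 𝕜 : Type*} [LinearOrder ι] [LocallyFiniteOrderBot ι] [Fintype κ]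
    [Field 𝕜] (b bstar : ι → κ → 𝕜) (μ : ι → ι → 𝕜) : Prop where
  bstar_eq : ∀ i, bstar i = b i - ∑ l ∈ Iio i, μ i l • bstar l
  coeff_eq : ∀ i l, l < i → μ i l = (b i ⬝ᵥ bstar l) / (bstar l ⬝ᵥ bstar l)

namespace IsGramSchmidt

variable {ι κ 𝕜 : Type*} [LinearOrder ι] [LocallyFiniteOrderBot ι] [Fintype κ] [Field 𝕜]
  {b bstar : ι → κ → 𝕜} {μ : ι → ι → 𝕜}

theorem eq_bstar_add (h : IsGramSchmidt b bstar μ) (i : ι) :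
    b i = bstar i + ∑ l ∈ Iio i, μ i l • bstar l := by
  rw [h.bstar_eq i, sub_add_cancel]

theorem bstar_sub_mem_span [WellFoundedLT ι] (h : IsGramSchmidt b bstar μ) (i : ι) :
    bstar i - b i ∈ Submodule.span 𝕜 (b '' Set.Iio i) := by
  induction i using WellFoundedLT.induction with
  | _ i ih =>
  rw [h.bstar_eq i, sub_sub_cancel_left]
  refine neg_mem (Submodule.sum_mem _ fun l hl => Submodule.smul_mem _ _ ?_)
  have hli := mem_Iio.1 hl
  rw [← sub_add_cancel (bstar l) (b l)]
  exact add_mem (Submodule.span_mono (Set.image_mono (Set.Iio_subset_Iio hli.le)) (ih l hli))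
    (Submodule.subset_span ⟨l, hli, rfl⟩)

variable [LinearOrder 𝕜] [IsStrictOrderedRing 𝕜]

theorem coeff_mul_dotProduct_self (h : IsGramSchmidt b bstar μ) {i l : ι} (hli : l < i) :
    μ i l * (bstar l ⬝ᵥ bstar l) = b i ⬝ᵥ bstar l := by
  by_cases h0 : bstar l ⬝ᵥ bstar l = 0
  · rw [h0, mul_zero, dotProduct_self_eq_zero.1 h0, dotProduct_zero]
  · rw [h.coeff_eq i l hli, div_mul_cancel₀ _ h0]

variable [WellFoundedLT ι]

theorem dotProduct_bstar_eq_zero_of_lt (h : IsGramSchmidt b bstar μ) {i l : ι} (hli : l < i) :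
    bstar i ⬝ᵥ bstar l = 0 := by
  induction i using WellFoundedLT.induction generalizing l with
  | _ i ih =>
  have hsum : ∑ m ∈ Iio i, μ i m * (bstar m ⬝ᵥ bstar l) = μ i l * (bstar l ⬝ᵥ bstar l) := by
    refine sum_eq_single_of_mem l (mem_Iio.2 hli) fun m hm hml => ?_
    rcases hml.lt_or_gt with hml | hlm
    · rw [dotProduct_comm, ih l hli hml, mul_zero]
    · rw [ih m (mem_Iio.1 hm) hlm, mul_zero]
  simp only [h.bstar_eq i, sub_dotProduct, sum_dotProduct, smul_dotProduct, smul_eq_mul]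
  rw [hsum, h.coeff_mul_dotProduct_self hli, sub_self]

theorem dotProduct_bstar_eq_zero_of_ne (h : IsGramSchmidt b bstar μ) {i l : ι} (hil : i ≠ l) :
    bstar i ⬝ᵥ bstar l = 0 := by
  rcases hil.lt_or_gt with hil | hli
  · rw [dotProduct_comm, h.dotProduct_bstar_eq_zero_of_lt hil]
  · exact h.dotProduct_bstar_eq_zero_of_lt hli

theorem dotProduct_sub_proj_eq_zero (h : IsGramSchmidt b bstar μ) {i j p : ι} (hji : j < i)
    (hpj : p ≤ j) : b p ⬝ᵥ (b i - ∑ l ∈ Iic j, μ i l • bstar l) = 0 := by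
  have hbstar : ∀ q ≤ j, bstar q ⬝ᵥ (b i - ∑ l ∈ Iic j, μ i l • bstar l) = 0 := by
    intro q hqj
    rw [dotProduct_sub, dotProduct_sum, sum_eq_single_of_mem q (mem_Iic.2 hqj), dotProduct_smul,
      smul_eq_mul, dotProduct_comm, ← h.coeff_mul_dotProduct_self (hqj.trans_lt hji), sub_self]
    intro l _ hlq
    rw [dotProduct_smul, h.dotProduct_bstar_eq_zero_of_ne hlq.symm, smul_zero]
  rw [h.eq_bstar_add p, add_dotProduct, sum_dotProduct, hbstar p hpj, zero_add]
  exact sum_eq_zero fun l hl => by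
    rw [smul_dotProduct, hbstar l ((mem_Iio.1 hl).le.trans hpj), smul_zero]

end IsGramSchmidt

section PrefixGram

variable {κ R : Type*} [Fintype κ] [CommRing R] {m : ℕ} (b : Fin m → κ → R) (j : Fin m)

def prefixGram : Matrix (Fin (j + 1)) (Fin (j + 1)) R :=
  of fun p q => b (Fin.castLE j.isLt p) ⬝ᵥ b (Fin.castLE j.isLt q)

def prefixGramUpdateLast (w : κ → R) : Matrix (Fin (j + 1)) (Fin (j + 1)) R :=
  of fun p q => if q = Fin.last j then b (Fin.castLE j.isLt p) ⬝ᵥ w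
    else b (Fin.castLE j.isLt p) ⬝ᵥ b (Fin.castLE j.isLt q)

theorem prefixGramUpdateLast_eq_updateCol (w : κ → R) :
    prefixGramUpdateLast b j w =
      (prefixGram b j).updateCol (Fin.last j) fun p => b (Fin.castLE j.isLt p) ⬝ᵥ w := by
  ext p q
  by_cases hq : q = Fin.last j <;> simp [prefixGramUpdateLast, prefixGram, hq]

theorem prefixGramUpdateLast_self : prefixGramUpdateLast b j (b j) = prefixGram b j := by
  have hlast : Fin.castLE j.isLt (Fin.last j) = j := Fin.ext rfl
  rw [prefixGramUpdateLast_eq_updateCol, ← hlast]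
  exact updateCol_eq_self _ _

@[simps]
def prefixGramUpdateLastDet : (κ → R) →ₗ[R] R where
  toFun w := (prefixGramUpdateLast b j w).det
  map_add' v w := by
    simp only [prefixGramUpdateLast_eq_updateCol, dotProduct_add]
    exact det_updateCol_add _ _ _ _
  map_smul' c w := by
    simp only [prefixGramUpdateLast_eq_updateCol, dotProduct_smul, smul_eq_mul]
    exact det_updateCol_smul _ _ _ _

theorem prefixGramUpdateLastDet_eq_zero_of_mem_span {w : κ → R}
    (hw : w ∈ Submodule.span R (b '' Set.Iio j)) : prefixGramUpdateLastDet b j w = 0 := by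
  suffices Submodule.span R (b '' Set.Iio j) ≤ LinearMap.ker (prefixGramUpdateLastDet b j) from
    this hw
  rw [Submodule.span_le]
  rintro _ ⟨l, hlj, rfl⟩
  have hne : (⟨l, Nat.lt_succ_of_lt hlj⟩ : Fin (j + 1)) ≠ Fin.last j := Fin.ne_of_lt hlj
  rw [SetLike.mem_coe, LinearMap.mem_ker, prefixGramUpdateLastDet_apply,
    prefixGramUpdateLast_eq_updateCol]
  exact det_updateCol_eq_zero hne

end PrefixGram

theorem IsGramSchmidt.coeff_mul_det_prefixGram {κ 𝕜 : Type*} [Fintype κ] [Field 𝕜]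
    [LinearOrder 𝕜] [IsStrictOrderedRing 𝕜] {m : ℕ} {b bstar : Fin m → κ → 𝕜}
    {μ : Fin m → Fin m → 𝕜} (h : IsGramSchmidt b bstar μ) {i j : Fin m} (hji : j < i) :
    μ i j * (prefixGram b j).det = (prefixGramUpdateLast b j (b i)).det := by
  set proj := ∑ l ∈ Iic j, μ i l • bstar l
  have hproj : prefixGramUpdateLast b j (b i) = prefixGramUpdateLast b j proj := by
    simp only [prefixGramUpdateLast_eq_updateCol]
    congr 1
    funext p
    rw [← sub_eq_zero, ← dotProduct_sub]
    exact h.dotProduct_sub_proj_eq_zero hji (Fin.le_def.2 (Nat.le_of_lt_succ p.isLt))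
  have hrest : proj - μ i j • b j ∈ Submodule.span 𝕜 (b '' Set.Iio j) := by
    have hsplit : proj - μ i j • b j =
        μ i j • (bstar j - b j) + ∑ l ∈ Iio j, μ i l • (bstar l - b l + b l) := by
      simp only [proj, ← Iio_insert, sum_insert notMem_Iio_self, sub_add_cancel, smul_sub]
      abel
    rw [hsplit]
    refine add_mem (Submodule.smul_mem _ _ (h.bstar_sub_mem_span j))
      (Submodule.sum_mem _ fun l hl => Submodule.smul_mem _ _ (add_mem ?_ ?_))
    · exact Submodule.span_mono (Set.image_mono (Set.Iio_subset_Iio (mem_Iio.1 hl).le))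
        (h.bstar_sub_mem_span l)
    · exact Submodule.subset_span ⟨l, mem_Iio.1 hl, rfl⟩
  calc μ i j * (prefixGram b j).det
      = prefixGramUpdateLastDet b j (μ i j • b j + (proj - μ i j • b j)) := by
        rw [map_add, map_smul, prefixGramUpdateLastDet_eq_zero_of_mem_span b j hrest, add_zero,
          prefixGramUpdateLastDet_apply, prefixGramUpdateLast_self, smul_eq_mul]
    _ = (prefixGramUpdateLast b j (b i)).det := by
        rw [add_sub_cancel, prefixGramUpdateLastDet_apply, hproj]

theorem Subring.det_mem {A n : Type*} [CommRing A] [Fintype n] [DecidableEq n] (R : Subring A)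
    {M : Matrix n n A} (hM : ∀ p q, M p q ∈ R) : M.det ∈ R := by
  rw [det_apply']
  exact R.sum_mem fun σ _ => R.mul_mem (intCast_mem R _) (R.prod_mem fun p _ => hM _ _)

theorem Subring.dotProduct_mem {A κ : Type*} [CommRing A] [Fintype κ] (R : Subring A)
    {u v : κ → A} (hu : ∀ k, u k ∈ R) (hv : ∀ k, v k ∈ R) : u ⬝ᵥ v ∈ R :=
  R.sum_mem fun k _ => R.mul_mem (hu k) (hv k)

theorem stmt_11_general (n : ℕ) (b bstar : Fin n → (Fin n → ℝ)) (μ : Fin n → Fin n → ℝ)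
    (hGS : ∀ i, bstar i = b i - ∑ l ∈ Finset.Iio i, μ i l • bstar l)
    (hμ : ∀ i l : Fin n, l < i →
      μ i l = (∑ k, b i k * bstar l k) / (∑ k, bstar l k * bstar l k))
    (i j : Fin n) (hij : j < i) :
    μ i j * (Matrix.of fun p q : Fin ((j : ℕ) + 1) =>
        ∑ k, b (Fin.castLE j.isLt p) k * b (Fin.castLE j.isLt q) k).det =
      (Matrix.of fun p q : Fin ((j : ℕ) + 1) =>
        if q = Fin.last (j : ℕ) then ∑ k, b (Fin.castLE j.isLt p) k * b i k
        else ∑ k, b (Fin.castLE j.isLt p) k * b (Fin.castLE j.isLt q) k).det ∧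
    ∀ R : Subring ℝ, (∀ i' k, b i' k ∈ R) →
      (Matrix.of fun p q : Fin ((j : ℕ) + 1) =>
          if q = Fin.last (j : ℕ) then ∑ k, b (Fin.castLE j.isLt p) k * b i k
          else ∑ k, b (Fin.castLE j.isLt p) k * b (Fin.castLE j.isLt q) k).det ∈ R ∧
      (Matrix.of fun p q : Fin ((j : ℕ) + 1) =>
          ∑ k, b (Fin.castLE j.isLt p) k * b (Fin.castLE j.isLt q) k).det ∈ R := by
  refine ⟨IsGramSchmidt.coeff_mul_det_prefixGram ⟨hGS, hμ⟩ hij, fun R hR => ⟨?_, ?_⟩⟩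
  · refine R.det_mem fun p q => ?_
    rw [of_apply]
    split <;> exact R.dotProduct_mem (hR _) (hR _)
  · exact R.det_mem fun p q => R.dotProduct_mem (hR _) (hR _)

theorem stmt_11 (n : ℕ) (b bstar : Fin n → (Fin n → ℝ)) (μ : Fin n → Fin n → ℝ)
    (hind : LinearIndependent ℝ b)
    (hGS : ∀ i, bstar i = b i - ∑ l ∈ Finset.Iio i, μ i l • bstar l)
    (hμ : ∀ i l : Fin n, l < i →
      μ i l = (∑ k, b i k * bstar l k) / (∑ k, bstar l k * bstar l k))
    (i j : Fin n) (hij : j < i) :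
    μ i j * (Matrix.of fun p q : Fin ((j : ℕ) + 1) =>
        ∑ k, b (Fin.castLE j.isLt p) k * b (Fin.castLE j.isLt q) k).det =
      (Matrix.of fun p q : Fin ((j : ℕ) + 1) =>
        if q = Fin.last (j : ℕ) then ∑ k, b (Fin.castLE j.isLt p) k * b i k
        else ∑ k, b (Fin.castLE j.isLt p) k * b (Fin.castLE j.isLt q) k).det ∧
    ∀ R : Subring ℝ, (∀ i' k, b i' k ∈ R) →
      (Matrix.of fun p q : Fin ((j : ℕ) + 1) =>
          if q = Fin.last (j : ℕ) then ∑ k, b (Fin.castLE j.isLt p) k * b i k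
          else ∑ k, b (Fin.castLE j.isLt p) k * b (Fin.castLE j.isLt q) k).det ∈ R ∧
      (Matrix.of fun p q : Fin ((j : ℕ) + 1) =>
          ∑ k, b (Fin.castLE j.isLt p) k * b (Fin.castLE j.isLt q) k).det ∈ R :=
  stmt_11_general n b bstar μ hGS hμ i j hij
end

section
/- Let b_1, …, b_j ∈ ℝ^n be linearly independent vectors with Gram–Schmidt orthogonalization b_1*, …, b_j*, and let L > 0 be such that every nonzero vector x of the lattice Λ_j = {c_1 b_1 + ⋯ + c_j b_j : c_1, …, c_j ∈ ℤ} satisfies ‖x‖₂² ≥ L. Then d_j := ‖b_1*‖₂²·‖b_2*‖₂²⋯‖b_j*‖₂² ≥ (L/j)^j. -/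
/-! Let `M` send `x` to its coordinates `(⟨x, b_l*⟩ / ‖b_l*‖)_l`. Since the `b_l*` are orthogonal
and span the `b_i`, `M` is isometric on `Λ_j`, and the matrix with rows `M b_i` is lower triangular
with diagonal `‖b_l*‖`, so `M Λ_j` is a full lattice in `ℝ^j` of covolume `√d_j`. If
`d_j < (L/j)^j`, the open cube of half-side `√(L/j)` has volume `> 2^j √d_j`, so by Minkowski's
theorem it contains a nonzero point of `M Λ_j`, whose squared norm is `< j · L/j = L`. -/

open Finset Matrix MeasureTheory

theorem dotProduct_self_nonneg {κ : Type*} [Fintype κ] (v : κ → ℝ) : 0 ≤ v ⬝ᵥ v :=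
  Fintype.sum_nonneg fun _ => mul_self_nonneg _

theorem sum_smul_dotProduct_of_orthogonal {ι κ : Type*} [Fintype κ] {e : ι → κ → ℝ}
    {s : Finset ι} {l : ι} (hl : l ∈ s) (h : ∀ m ∈ s, m ≠ l → e m ⬝ᵥ e l = 0) (t : ι → ℝ) :
    (∑ m ∈ s, t m • e m) ⬝ᵥ e l = t l * (e l ⬝ᵥ e l) := by
  rw [sum_dotProduct, sum_eq_single_of_mem l hl fun m hm hml => by
    rw [smul_dotProduct, h m hm hml, smul_zero], smul_dotProduct, smul_eq_mul]

section OrthoCoords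

variable {ι κ : Type*} [Fintype κ]

noncomputable def orthoCoords (e : ι → κ → ℝ) : Matrix ι κ ℝ :=
  Matrix.of fun l => (√(e l ⬝ᵥ e l))⁻¹ • e l

theorem orthoCoords_mulVec_apply (e : ι → κ → ℝ) (v : κ → ℝ) (l : ι) :
    (orthoCoords e *ᵥ v) l = (e l ⬝ᵥ v) / √(e l ⬝ᵥ e l) := by
  change ((√(e l ⬝ᵥ e l))⁻¹ • e l) ⬝ᵥ v = _
  rw [smul_dotProduct, smul_eq_mul, inv_mul_eq_div]

theorem dotProduct_orthoCoords_mulVec [Fintype ι] {e : ι → κ → ℝ}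
    (horth : Pairwise fun l m => e l ⬝ᵥ e m = 0) {v : κ → ℝ}
    (hv : v ∈ Submodule.span ℝ (Set.range e)) :
    (orthoCoords e *ᵥ v) ⬝ᵥ (orthoCoords e *ᵥ v) = v ⬝ᵥ v := by
  obtain ⟨t, rfl⟩ := (Submodule.mem_span_range_iff_exists_fun ℝ).1 hv
  have hcoef (l : ι) : (∑ m, t m • e m) ⬝ᵥ e l = t l * (e l ⬝ᵥ e l) :=
    sum_smul_dotProduct_of_orthogonal (mem_univ l) (fun _ _ hml => horth hml) t
  have hMv : orthoCoords e *ᵥ ∑ m, t m • e m = fun l => t l * √(e l ⬝ᵥ e l) :=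
    funext fun l => by
      rw [orthoCoords_mulVec_apply, dotProduct_comm, hcoef, mul_div_assoc, Real.div_sqrt]
  rw [hMv, sum_dotProduct]
  refine sum_congr rfl fun l _ => ?_
  rw [smul_dotProduct, dotProduct_comm, hcoef, smul_eq_mul, mul_mul_mul_comm,
    Real.mul_self_sqrt (dotProduct_self_nonneg _), mul_assoc]

end OrthoCoords

theorem exists_ne_zero_mem_span_int_forall_abs_lt {ι : Type*} [Fintype ι] [DecidableEq ι]
    (B : Module.Basis ι ℝ (ι → ℝ)) {r : ℝ} (hr : 0 ≤ r)
    (hdet : |(Matrix.of B).det| < r ^ Fintype.card ι) :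
    ∃ x ∈ Submodule.span ℤ (Set.range B), x ≠ 0 ∧ ∀ l, |x l| < r := by
  let cube : Set (ι → ℝ) := Set.univ.pi fun _ => Set.Ioo (-r) r
  have hsymm : ∀ x ∈ cube, -x ∈ cube := fun x hx l _ => by
    have := hx l (Set.mem_univ l)
    simp only [Pi.neg_apply, Set.mem_Ioo] at this ⊢
    constructor <;> linarith [this.1, this.2]
  have hconv : Convex ℝ cube := convex_pi fun _ _ => convex_Ioo _ _
  have hvol :
      volume (ZSpan.fundamentalDomain B) * 2 ^ Module.finrank ℝ (ι → ℝ) < volume cube := by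
    rw [ZSpan.volume_fundamentalDomain, volume_pi_pi, Module.finrank_fintype_fun_eq_card]
    simp only [Real.volume_Ioo, prod_const, card_univ, sub_neg_eq_add]
    rw [← two_mul, ← ENNReal.ofReal_pow (by positivity), ← ENNReal.ofReal_ofNat,
      ← ENNReal.ofReal_pow zero_le_two, ← ENNReal.ofReal_mul (abs_nonneg _),
      ENNReal.ofReal_lt_ofReal_iff_of_nonneg (by positivity), mul_pow, mul_comm]
    exact mul_lt_mul_of_pos_left hdet (by positivity)
  have : Countable (Submodule.span ℤ (Set.range B)).toAddSubgroup :=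
    inferInstanceAs (Countable (Submodule.span ℤ (Set.range B)))
  obtain ⟨⟨x, hxL⟩, hx0, hx⟩ := exists_ne_zero_mem_lattice_of_measure_mul_two_pow_lt_measure
    (ZSpan.isAddFundamentalDomain' B volume) hsymm hconv hvol
  exact ⟨x, hxL, fun h => hx0 (Subtype.ext h), fun l => abs_lt.2 (hx l (Set.mem_univ l))⟩

theorem div_card_pow_le_sq_det_of_forall_le_dotProduct {ι : Type*} [Fintype ι] [DecidableEq ι]
    {u : ι → ι → ℝ} (hu : LinearIndependent ℝ u) {L : ℝ} (hL : 0 < L)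
    (hmin : ∀ c : ι → ℤ, ∑ i, (c i : ℝ) • u i ≠ 0 →
      L ≤ (∑ i, (c i : ℝ) • u i) ⬝ᵥ (∑ i, (c i : ℝ) • u i)) :
    (L / Fintype.card ι) ^ Fintype.card ι ≤ (Matrix.of u).det ^ 2 := by
  classical
  by_contra! hlt
  set r := √(L / Fintype.card ι)
  have hr2 : r ^ 2 = L / Fintype.card ι := Real.sq_sqrt (by positivity)
  let B := basisOfPiSpaceOfLinearIndependent hu
  have hB : ⇑B = u := coe_basisOfPiSpaceOfLinearIndependent hu
  have hdet : |(Matrix.of B).det| < r ^ Fintype.card ι := by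
    refine lt_of_pow_lt_pow_left₀ 2 (by positivity) ?_
    rwa [sq_abs, ← pow_mul, mul_comm, pow_mul, hr2, hB]
  obtain ⟨x, hxΛ, hx0, hxr⟩ :=
    exists_ne_zero_mem_span_int_forall_abs_lt B (Real.sqrt_nonneg _) hdet
  obtain ⟨c, rfl⟩ := (Submodule.mem_span_range_iff_exists_fun ℤ).1 hxΛ
  simp only [hB, ← Int.cast_smul_eq_zsmul ℝ] at hx0 hxr
  have : Nonempty ι := not_isEmpty_iff.1 fun _ => hx0 (Subsingleton.elim _ _)
  have hxx : (∑ i, (c i : ℝ) • u i) ⬝ᵥ (∑ i, (c i : ℝ) • u i) < L := calc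
    _ = ∑ l, (∑ i, (c i : ℝ) • u i) l ^ 2 := by simp only [dotProduct, sq]
    _ < ∑ _l : ι, r ^ 2 := sum_lt_sum_of_nonempty univ_nonempty fun l _ => sq_lt_sq.2 (by
          rw [abs_of_nonneg (Real.sqrt_nonneg _)]; exact hxr l)
    _ = L := by rw [sum_const, card_univ, nsmul_eq_mul, hr2]; field_simp
  exact (hmin c hx0).not_gt hxx

section GramSchmidt

variable {ι κ : Type*} [LinearOrder ι] [LocallyFiniteOrderBot ι] {b bstar : ι → κ → ℝ}
  {μ : ι → ι → ℝ}

theorem gs_eq_add_sum (hGS : ∀ i, bstar i = b i - ∑ l ∈ Iio i, μ i l • bstar l) (i : ι) :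
    b i = bstar i + ∑ l ∈ Iio i, μ i l • bstar l := by
  rw [hGS i, sub_add_cancel]

theorem gs_mem_span (hGS : ∀ i, bstar i = b i - ∑ l ∈ Iio i, μ i l • bstar l) (i : ι) :
    b i ∈ Submodule.span ℝ (Set.range bstar) := by
  rw [gs_eq_add_sum hGS i]
  exact add_mem (Submodule.subset_span ⟨i, rfl⟩)
    (sum_mem fun l _ => Submodule.smul_mem _ _ (Submodule.subset_span ⟨l, rfl⟩))

variable [WellFoundedLT ι] [Fintype κ]

theorem gs_dotProduct_eq_zero_of_lt (hGS : ∀ i, bstar i = b i - ∑ l ∈ Iio i, μ i l • bstar l)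
    (hμ : ∀ i l, l < i → μ i l = (b i ⬝ᵥ bstar l) / (bstar l ⬝ᵥ bstar l)) {i l : ι} (hl : l < i) :
    bstar i ⬝ᵥ bstar l = 0 := by
  induction i using WellFoundedLT.induction generalizing l with
  | _ i ih =>
  have hsum : (∑ m ∈ Iio i, μ i m • bstar m) ⬝ᵥ bstar l = μ i l * (bstar l ⬝ᵥ bstar l) := by
    refine sum_smul_dotProduct_of_orthogonal (mem_Iio.2 hl) (fun m hm hml => ?_) _
    rcases hml.lt_or_gt with hml | hlm
    · rw [dotProduct_comm, ih l hl hml]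
    · exact ih m (mem_Iio.1 hm) hlm
  rw [hGS i, sub_dotProduct, hsum, hμ i l hl]
  by_cases h0 : bstar l ⬝ᵥ bstar l = 0
  · rw [dotProduct_self_eq_zero.1 h0]
    simp
  · rw [div_mul_cancel₀ _ h0, sub_self]

theorem gs_pairwise_orthogonal (hGS : ∀ i, bstar i = b i - ∑ l ∈ Iio i, μ i l • bstar l)
    (hμ : ∀ i l, l < i → μ i l = (b i ⬝ᵥ bstar l) / (bstar l ⬝ᵥ bstar l)) :
    Pairwise fun l m => bstar l ⬝ᵥ bstar m = 0 := by
  intro l m hlm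
  rcases hlm.lt_or_gt with h | h
  · rw [dotProduct_comm, gs_dotProduct_eq_zero_of_lt hGS hμ h]
  · exact gs_dotProduct_eq_zero_of_lt hGS hμ h

theorem gs_dotProduct_eq_of_le (hGS : ∀ i, bstar i = b i - ∑ l ∈ Iio i, μ i l • bstar l)
    (hμ : ∀ i l, l < i → μ i l = (b i ⬝ᵥ bstar l) / (bstar l ⬝ᵥ bstar l)) {i l : ι} (h : i ≤ l) :
    b i ⬝ᵥ bstar l = bstar i ⬝ᵥ bstar l := by
  have hsum : (∑ m ∈ Iio i, μ i m • bstar m) ⬝ᵥ bstar l = 0 := by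
    rw [sum_dotProduct]
    exact sum_eq_zero fun m hm => by
      rw [smul_dotProduct, dotProduct_comm,
        gs_dotProduct_eq_zero_of_lt hGS hμ ((mem_Iio.1 hm).trans_le h), smul_zero]
  rw [gs_eq_add_sum hGS i, add_dotProduct, hsum, add_zero]

variable [Fintype ι]

theorem gs_dotProduct_orthoCoords_mulVec
    (hGS : ∀ i, bstar i = b i - ∑ l ∈ Iio i, μ i l • bstar l)
    (hμ : ∀ i l, l < i → μ i l = (b i ⬝ᵥ bstar l) / (bstar l ⬝ᵥ bstar l)) {v : κ → ℝ}
    (hv : v ∈ Submodule.span ℝ (Set.range b)) :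
    (orthoCoords bstar *ᵥ v) ⬝ᵥ (orthoCoords bstar *ᵥ v) = v ⬝ᵥ v :=
  dotProduct_orthoCoords_mulVec (gs_pairwise_orthogonal hGS hμ)
    (Submodule.span_le.2 (Set.range_subset_iff.2 (gs_mem_span hGS)) hv)

theorem gs_linearIndependent_orthoCoords_mulVec (hind : LinearIndependent ℝ b)
    (hGS : ∀ i, bstar i = b i - ∑ l ∈ Iio i, μ i l • bstar l)
    (hμ : ∀ i l, l < i → μ i l = (b i ⬝ᵥ bstar l) / (bstar l ⬝ᵥ bstar l)) :
    LinearIndependent ℝ fun i => orthoCoords bstar *ᵥ b i := by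
  refine hind.map (f := (orthoCoords bstar).mulVecLin) <|
    Submodule.disjoint_def.2 fun v hv hker => ?_
  have hzero : orthoCoords bstar *ᵥ v = 0 := hker
  rw [← dotProduct_self_eq_zero, ← gs_dotProduct_orthoCoords_mulVec hGS hμ hv, hzero,
    dotProduct_zero]

theorem gs_sq_det_orthoCoords_mulVec
    (hGS : ∀ i, bstar i = b i - ∑ l ∈ Iio i, μ i l • bstar l)
    (hμ : ∀ i l, l < i → μ i l = (b i ⬝ᵥ bstar l) / (bstar l ⬝ᵥ bstar l)) :
    (Matrix.of fun i => orthoCoords bstar *ᵥ b i).det ^ 2 = ∏ i, bstar i ⬝ᵥ bstar i := by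
  have htri : (Matrix.of fun i => orthoCoords bstar *ᵥ b i).IsLowerTriangular := fun i l hil => by
    replace hil : i < l := hil
    rw [of_apply, orthoCoords_mulVec_apply, dotProduct_comm, gs_dotProduct_eq_of_le hGS hμ hil.le,
      dotProduct_comm, gs_dotProduct_eq_zero_of_lt hGS hμ hil, zero_div]
  rw [det_of_isLowerTriangular _ htri, ← prod_pow]
  refine prod_congr rfl fun i _ => ?_
  rw [of_apply, orthoCoords_mulVec_apply, dotProduct_comm, gs_dotProduct_eq_of_le hGS hμ le_rfl,
    Real.div_sqrt, Real.sq_sqrt (dotProduct_self_nonneg _)]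

end GramSchmidt

theorem stmt_12 (n j : ℕ) (b bstar : Fin j → (Fin n → ℝ)) (μ : Fin j → Fin j → ℝ)
    (hind : LinearIndependent ℝ b)
    (hGS : ∀ i, bstar i = b i - ∑ l ∈ Finset.Iio i, μ i l • bstar l)
    (hμ : ∀ i l : Fin j, l < i →
      μ i l = (∑ k, b i k * bstar l k) / (∑ k, bstar l k * bstar l k))
    (L : ℝ) (hL : 0 < L)
    (hmin : ∀ c : Fin j → ℤ, (∑ i, (c i : ℝ) • b i) ≠ 0 →
      L ≤ ∑ k, (∑ i, (c i : ℝ) • b i) k ^ 2) :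
    (L / (j : ℝ)) ^ j ≤ ∏ i, ∑ k, bstar i k ^ 2 := by
  set M := orthoCoords bstar
  have hmin' (c : Fin j → ℤ) (hc : ∑ i, (c i : ℝ) • M *ᵥ b i ≠ 0) :
      L ≤ (∑ i, (c i : ℝ) • M *ᵥ b i) ⬝ᵥ (∑ i, (c i : ℝ) • M *ᵥ b i) := by
    simp only [← mulVec_smul, ← mulVec_sum] at hc ⊢
    rw [gs_dotProduct_orthoCoords_mulVec hGS hμ
      (sum_mem fun i _ => Submodule.smul_mem _ _ (Submodule.subset_span ⟨i, rfl⟩))]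
    simpa only [dotProduct, sq] using hmin c fun h => hc (by rw [h, mulVec_zero])
  have key := div_card_pow_le_sq_det_of_forall_le_dotProduct
    (gs_linearIndependent_orthoCoords_mulVec hind hGS hμ) hL hmin'
  rw [Fintype.card_fin, gs_sq_det_orthoCoords_mulVec hGS hμ] at key
  simpa only [dotProduct, sq] using key
end

section
/- Let b_1, …, b_n ∈ ℝ^n be linearly independent vectors with Gram–Schmidt orthogonalization b_1*, …, b_n*. Then every nonzero vector x of the lattice Λ = {c_1 b_1 + ⋯ + c_n b_n : c_1, …, c_n ∈ ℤ} satisfies ‖x‖₂² ≥ min_{1≤i≤n} ‖b_i*‖₂². -/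
/-! For `x = ∑ c_i b_i` and `j` the last index with `c_j ≠ 0`, `⟨x, b_j*⟩ = c_j ‖b_j*‖²`: for `i < j`
the vector `b_i` lies in the span of `b_1*, …, b_i*`, which is orthogonal to `b_j*`, and `⟨b_j, b_j*⟩ = ‖b_j*‖²`.
Cauchy–Schwarz then gives `c_j² ‖b_j*‖⁴ ≤ ‖x‖² ‖b_j*‖²`, and `c_j² ≥ 1` since `c_j` is a nonzero
integer. -/

open Finset Matrix

section GramSchmidt

variable {ι m K : Type*} [LinearOrder ι] [LocallyFiniteOrderBot ι] [Fintype m] [Field K]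
  {b bstar : ι → m → K} {μ : ι → ι → K}

/-- When `bstar l = 0` the coefficient `μ i l` is a junk value, but then it multiplies zero. -/
theorem gramSchmidt_dotProduct_eq_zero_of_lt [WellFoundedLT ι] [LinearOrder K]
    [IsStrictOrderedRing K]
    (hGS : ∀ i, bstar i = b i - ∑ l ∈ Iio i, μ i l • bstar l)
    (hμ : ∀ i l, l < i → μ i l = (b i ⬝ᵥ bstar l) / (bstar l ⬝ᵥ bstar l)) {i l : ι}
    (hli : l < i) : bstar i ⬝ᵥ bstar l = 0 := by
  induction i using WellFoundedLT.induction generalizing l with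
  | _ i ih =>
    have hsum : ∑ k ∈ Iio i, μ i k * (bstar k ⬝ᵥ bstar l) = μ i l * (bstar l ⬝ᵥ bstar l) := by
      refine sum_eq_single_of_mem l (mem_Iio.2 hli) fun k hk hkl => ?_
      rcases hkl.lt_or_gt with hkl | hlk
      · rw [dotProduct_comm, ih l hli hkl, mul_zero]
      · rw [ih k (mem_Iio.1 hk) hlk, mul_zero]
    have hexpand : bstar i ⬝ᵥ bstar l = b i ⬝ᵥ bstar l - μ i l * (bstar l ⬝ᵥ bstar l) := by
      simp only [← hsum, hGS i, sub_dotProduct, sum_dotProduct, smul_dotProduct, smul_eq_mul]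
    by_cases hN : bstar l ⬝ᵥ bstar l = 0
    · rw [hexpand, dotProduct_self_eq_zero.1 hN]
      simp
    · rw [hexpand, hμ i l hli, div_mul_cancel₀ _ hN, sub_self]

theorem dotProduct_gramSchmidt_eq_of_le
    (hGS : ∀ i, bstar i = b i - ∑ l ∈ Iio i, μ i l • bstar l)
    (horth : ∀ i l, l < i → bstar i ⬝ᵥ bstar l = 0) {i j : ι} (hij : i ≤ j) :
    b i ⬝ᵥ bstar j = bstar i ⬝ᵥ bstar j := by
  have hb : b i = bstar i + ∑ l ∈ Iio i, μ i l • bstar l := by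
    rw [hGS i, sub_add_cancel]
  rw [hb, add_dotProduct, add_eq_left, sum_dotProduct]
  refine sum_eq_zero fun l hl => ?_
  rw [smul_dotProduct, dotProduct_comm, horth j l ((mem_Iio.1 hl).trans_le hij), smul_zero]

theorem sum_smul_dotProduct_gramSchmidt [Fintype ι]
    (hGS : ∀ i, bstar i = b i - ∑ l ∈ Iio i, μ i l • bstar l)
    (horth : ∀ i l, l < i → bstar i ⬝ᵥ bstar l = 0) (c : ι → K) {j : ι}
    (hlast : ∀ i, j < i → c i = 0) :
    (∑ i, c i • b i) ⬝ᵥ bstar j = c j * (bstar j ⬝ᵥ bstar j) := by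
  rw [sum_dotProduct, sum_eq_single j]
  · rw [smul_dotProduct, smul_eq_mul, dotProduct_gramSchmidt_eq_of_le hGS horth le_rfl]
  · intro i _ hij
    rcases hij.lt_or_gt with hij | hji
    · rw [smul_dotProduct, dotProduct_gramSchmidt_eq_of_le hGS horth hij.le, dotProduct_comm,
        horth j i hij, smul_zero]
    · rw [hlast i hji, zero_smul, zero_dotProduct]
  · exact fun h => absurd (mem_univ j) h

end GramSchmidt

theorem sq_dotProduct_le_mul {m K : Type*} [Fintype m] [CommRing K] [LinearOrder K]
    [IsStrictOrderedRing K] (x v : m → K) : (x ⬝ᵥ v) ^ 2 ≤ (x ⬝ᵥ x) * (v ⬝ᵥ v) := by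
  simpa only [dotProduct, sq] using sum_mul_sq_le_sq_mul_sq univ x v

theorem dotProduct_self_le_of_dotProduct_eq_mul {m K : Type*} [Fintype m] [Field K]
    [LinearOrder K] [IsStrictOrderedRing K] {x v : m → K} {a : K} (ha : 1 ≤ a ^ 2)
    (h : x ⬝ᵥ v = a * (v ⬝ᵥ v)) : v ⬝ᵥ v ≤ x ⬝ᵥ x := by
  have hself_nonneg (w : m → K) : 0 ≤ w ⬝ᵥ w := sum_nonneg fun k _ => mul_self_nonneg (w k)
  rcases (hself_nonneg v).eq_or_lt with hN | hN
  · rw [← hN]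
    exact hself_nonneg x
  have hCS := sq_dotProduct_le_mul x v
  rw [h, mul_pow, sq (v ⬝ᵥ v), ← mul_assoc] at hCS
  calc v ⬝ᵥ v ≤ a ^ 2 * (v ⬝ᵥ v) := le_mul_of_one_le_left hN.le ha
    _ ≤ x ⬝ᵥ x := le_of_mul_le_mul_right hCS hN

theorem exists_ne_zero_forall_gt_eq_zero {ι M : Type*} [Fintype ι] [LinearOrder ι] [Zero M]
    {c : ι → M} (h : ∃ i, c i ≠ 0) : ∃ j, c j ≠ 0 ∧ ∀ i, j < i → c i = 0 := by
  classical
  obtain ⟨i₀, hi₀⟩ := h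
  have hne : (univ.filter (c · ≠ 0)).Nonempty := ⟨i₀, mem_filter.2 ⟨mem_univ i₀, hi₀⟩⟩
  refine ⟨_, (mem_filter.1 (max'_mem _ hne)).2, fun i hi => ?_⟩
  by_contra hci
  exact (le_max' _ i (mem_filter.2 ⟨mem_univ i, hci⟩)).not_gt hi

theorem stmt_14_general (n : ℕ) (hn : 0 < n) (b bstar : Fin n → (Fin n → ℝ))
    (μ : Fin n → Fin n → ℝ)
    (hGS : ∀ i, bstar i = b i - ∑ l ∈ Finset.Iio i, μ i l • bstar l)
    (hμ : ∀ i l : Fin n, l < i →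
      μ i l = (∑ k, b i k * bstar l k) / (∑ k, bstar l k * bstar l k))
    (c : Fin n → ℤ) (hc : (∑ i, (c i : ℝ) • b i) ≠ 0) :
    Finset.univ.inf' ⟨⟨0, hn⟩, Finset.mem_univ _⟩ (fun i => ∑ k, bstar i k ^ 2) ≤
      ∑ k, (∑ i, (c i : ℝ) • b i) k ^ 2 := by
  have horth : ∀ i l, l < i → bstar i ⬝ᵥ bstar l = 0 := fun i l =>
    gramSchmidt_dotProduct_eq_zero_of_lt hGS hμ
  obtain ⟨j, hcj, hlast⟩ := exists_ne_zero_forall_gt_eq_zero (c := c) <| by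
    contrapose! hc
    simp [hc]
  have hx := sum_smul_dotProduct_gramSchmidt hGS horth (fun i => (c i : ℝ)) (j := j)
    fun i hi => by simp [hlast i hi]
  have ha : (1 : ℝ) ≤ (c j : ℝ) ^ 2 := by
    exact_mod_cast (one_le_sq_iff_one_le_abs _).2 (Int.one_le_abs hcj)
  calc _ ≤ ∑ k, bstar j k ^ 2 := inf'_le _ (mem_univ j)
    _ ≤ ∑ k, (∑ i, (c i : ℝ) • b i) k ^ 2 := by
      simpa only [dotProduct, sq] using dotProduct_self_le_of_dotProduct_eq_mul ha hx

theorem stmt_14 (n : ℕ) (hn : 0 < n) (b bstar : Fin n → (Fin n → ℝ))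
    (μ : Fin n → Fin n → ℝ)
    (hind : LinearIndependent ℝ b)
    (hGS : ∀ i, bstar i = b i - ∑ l ∈ Finset.Iio i, μ i l • bstar l)
    (hμ : ∀ i l : Fin n, l < i →
      μ i l = (∑ k, b i k * bstar l k) / (∑ k, bstar l k * bstar l k))
    (c : Fin n → ℤ) (hc : (∑ i, (c i : ℝ) • b i) ≠ 0) :
    Finset.univ.inf' ⟨⟨0, hn⟩, Finset.mem_univ _⟩ (fun i => ∑ k, bstar i k ^ 2) ≤
      ∑ k, (∑ i, (c i : ℝ) • b i) k ^ 2 :=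
  stmt_14_general n hn b bstar μ hGS hμ c hc
end

section
/- Let b_1, …, b_n be vectors in ℤ[α]^n ⊂ ℝ^n, where each coordinate of each b_i is an element of ℤ[α] with opc at most C. For 1 ≤ j ≤ n let d_j ∈ ℤ[α] be the determinant of the j×j Gram matrix (⟨b_p, b_q⟩)_{1≤p,q≤j}, and for j < i ≤ n let λ_{ij} ∈ ℤ[α] be the determinant of the matrix obtained from it by replacing the last column with (⟨b_1, b_i⟩, …, ⟨b_j, b_i⟩)ᵀ. Then opc(d_j) ≤ n^j·j!·M_α^{2j−1}·C^{2j} and opc(λ_{ij}) ≤ n^j·j!·M_α^{2j−1}·C^{2j}, where M_α := m(1+‖f‖_∞)^{m−1}. -/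
open Polynomial Finset

/-- The real number represented by the coefficient vector `v` of an element of `ℤ[α]`. -/
noncomputable def coordVal (m : ℕ) (α : ℝ) (v : Fin m → ℤ) : ℝ :=
  ∑ t, (v t : ℝ) * α ^ (t : ℕ)

/-- `x` is represented by an integer coefficient vector with all entries bounded by `B`. -/
def Good (m : ℕ) (α : ℝ) (x : ℝ) (B : ℤ) : Prop :=
  ∃ c : Fin m → ℤ, (∑ t, (c t : ℝ) * α ^ (t : ℕ)) = x ∧ ∀ t, |c t| ≤ B

lemma Good.mono {m : ℕ} {α x : ℝ} {A B : ℤ} (h : Good m α x A) (hAB : A ≤ B) :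
    Good m α x B := by
  obtain ⟨c, h1, h2⟩ := h; exact ⟨c, h1, fun t => (h2 t).trans hAB⟩

lemma Good.zero (m : ℕ) (α : ℝ) : Good m α 0 0 := ⟨0, by simp, by simp⟩

lemma Good.neg {m : ℕ} {α x : ℝ} {A : ℤ} (h : Good m α x A) : Good m α (-x) A := by
  obtain ⟨c, h1, h2⟩ := h
  refine ⟨fun t => -c t, ?_, fun t => by simpa using h2 t⟩
  rw [← h1, ← Finset.sum_neg_distrib]
  push_cast
  simp [neg_mul]

lemma Good.add {m : ℕ} {α x y : ℝ} {A B : ℤ} (hx : Good m α x A) (hy : Good m α y B) :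
    Good m α (x + y) (A + B) := by
  obtain ⟨c, h1, h2⟩ := hx
  obtain ⟨c', h1', h2'⟩ := hy
  refine ⟨fun t => c t + c' t, ?_, fun t => ?_⟩
  · rw [← h1, ← h1', ← Finset.sum_add_distrib]
    push_cast
    simp [add_mul]
  · exact (abs_add_le _ _).trans (add_le_add (h2 t) (h2' t))

lemma Good.sum {m : ℕ} {α : ℝ} {ι : Type*} (s : Finset ι) (g : ι → ℝ) {B : ℤ}
    (hB : 0 ≤ B) (h : ∀ k ∈ s, Good m α (g k) B) :
    Good m α (∑ k ∈ s, g k) (s.card * B) := by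
  induction s using Finset.cons_induction with
  | empty => simpa using Good.zero m α
  | cons a s ha ih =>
    rw [Finset.sum_cons, Finset.card_cons]
    have : ((s.card + 1 : ℕ) : ℤ) * B = B + s.card * B := by push_cast; ring
    rw [this]
    exact (h a (Finset.mem_cons_self a s)).add (ih fun k hk => h k (Finset.mem_cons_of_mem hk))

/-- Reduction of a long representation modulo the minimal polynomial. -/
lemma reduce (α : ℝ) (m : ℕ) (F : ℤ) (hF : 0 ≤ F)
    (fc : ℕ → ℤ) (hfm : fc m = 1) (hfb : ∀ u, u < m → |fc u| ≤ F)
    (hf0 : ∀ u, m < u → fc u = 0)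
    (hrel : ∑ u ∈ Finset.range (m + 1), (fc u : ℝ) * α ^ u = 0) :
    ∀ (k : ℕ) (d : ℕ → ℤ) (D : ℤ), 0 ≤ D → (∀ u, |d u| ≤ D) →
      (∀ u, m + k ≤ u → d u = 0) →
      ∃ e : ℕ → ℤ, (∀ u, |e u| ≤ D * (1 + F) ^ k) ∧
        ∑ u ∈ Finset.range m, (e u : ℝ) * α ^ u
          = ∑ u ∈ Finset.range (m + k), (d u : ℝ) * α ^ u := by
  intro k
  induction k with
  | zero =>
    intro d D hD hb hs
    exact ⟨d, by simpa using hb, by simp⟩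
  | succ k ih =>
    intro d D hD hb hs
    set L := d (m + k) with hLdef
    set d' : ℕ → ℤ := fun u => d u - L * (if k ≤ u then fc (u - k) else 0) with hd'
    have hLb : |L| ≤ D := hb (m + k)
    have h1F : (0 : ℤ) ≤ 1 + F := by linarith
    have hs' : ∀ u, m + k ≤ u → d' u = 0 := by
      intro u hu
      rcases eq_or_lt_of_le hu with h | h
      · simp only [hd', ← h]
        rw [if_pos (by omega), show m + k - k = m by omega, hfm]
        ring
      · simp only [hd']
        rw [hs u (by omega), if_pos (by omega), hf0 (u - k) (by omega)]
        ring
    have hb' : ∀ u, |d' u| ≤ D * (1 + F) := by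
      intro u
      by_cases hu : m + k ≤ u
      · rw [hs' u hu]
        simp only [abs_zero]
        positivity
      · push_neg at hu
        by_cases hku : k ≤ u
        · simp only [hd', if_pos hku]
          have hfuk : |fc (u - k)| ≤ F := hfb (u - k) (by omega)
          calc |d u - L * fc (u - k)| ≤ |d u| + |L * fc (u - k)| := abs_sub _ _
            _ ≤ D + D * F := by
                refine add_le_add (hb u) ?_
                rw [abs_mul]
                exact mul_le_mul hLb hfuk (abs_nonneg _) hD
            _ = D * (1 + F) := by ring
        · simp only [hd', if_neg hku]
          calc |d u - L * 0| = |d u| := by rw [mul_zero, sub_zero]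
            _ ≤ D := hb u
            _ ≤ D * (1 + F) := by nlinarith
    obtain ⟨e, he1, he2⟩ := ih d' (D * (1 + F)) (by positivity) hb' hs'
    refine ⟨e, fun u => ?_, ?_⟩
    · calc |e u| ≤ D * (1 + F) * (1 + F) ^ k := he1 u
        _ = D * (1 + F) ^ (k + 1) := by rw [pow_succ]; ring
    · rw [he2]
      have hzero : ∑ u ∈ Finset.range (m + (k + 1)),
          ((if k ≤ u then fc (u - k) else 0 : ℤ) : ℝ) * α ^ u = 0 := by
        rw [show m + (k + 1) = k + (m + 1) by omega, Finset.sum_range_add]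
        have h1 : ∑ u ∈ Finset.range k,
            ((if k ≤ u then fc (u - k) else 0 : ℤ) : ℝ) * α ^ u = 0 := by
          apply Finset.sum_eq_zero
          intro u hu
          rw [Finset.mem_range] at hu
          rw [if_neg (by omega)]
          simp
        have h2 : ∑ u ∈ Finset.range (m + 1),
            ((if k ≤ k + u then fc (k + u - k) else 0 : ℤ) : ℝ) * α ^ (k + u) = 0 := by
          have : ∀ u ∈ Finset.range (m + 1),
              ((if k ≤ k + u then fc (k + u - k) else 0 : ℤ) : ℝ) * α ^ (k + u)
                = ((fc u : ℝ) * α ^ u) * α ^ k := by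
            intro u _
            rw [if_pos (by omega), show k + u - k = u by omega, pow_add]
            ring
          rw [Finset.sum_congr rfl this, ← Finset.sum_mul, hrel, zero_mul]
        rw [h1, h2, add_zero]
      have hsplit : ∀ u ∈ Finset.range (m + (k + 1)), (d u : ℝ) * α ^ u
          = (d' u : ℝ) * α ^ u
            + (L : ℝ) * (((if k ≤ u then fc (u - k) else 0 : ℤ) : ℝ) * α ^ u) := by
        intro u _
        simp only [hd']
        push_cast
        ring
      rw [Finset.sum_congr rfl hsplit, Finset.sum_add_distrib, ← Finset.mul_sum, hzero,
        mul_zero, add_zero, show m + (k + 1) = (m + k) + 1 by omega,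
        Finset.sum_range_succ, hs' (m + k) le_rfl]
      simp

/-- Multiplication closure for `Good`. -/
lemma Good.mul {m : ℕ} (hm : 1 ≤ m) {f : Polynomial ℤ}
    (hmonic : f.Monic) (hdeg : f.natDegree = m) {α : ℝ}
    (hroot : Polynomial.aeval α f = 0)
    {x y : ℝ} {A B : ℤ} (hA : 0 ≤ A) (hB : 0 ≤ B)
    (hx : Good m α x A) (hy : Good m α y B) :
    Good m α (x * y) ((m : ℤ) * (1 + fninf m f) ^ (m - 1) * A * B) := by
  obtain ⟨c, hcv, hcb⟩ := hx
  obtain ⟨c', hcv', hcb'⟩ := hy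
  set F : ℤ := fninf m f with hFdef
  have hF : 0 ≤ F := Int.natCast_nonneg _
  have hfm : f.coeff m = 1 := by rw [← hdeg]; exact hmonic
  have hfb : ∀ u, u < m → |f.coeff u| ≤ F := by
    intro u hu
    rw [Int.abs_eq_natAbs, hFdef, fninf]
    exact_mod_cast Finset.le_sup (f := fun i : Fin m => (f.coeff (i : ℕ)).natAbs)
      (Finset.mem_univ (⟨u, hu⟩ : Fin m))
  have hf0 : ∀ u, m < u → f.coeff u = 0 := fun u hu =>
    Polynomial.coeff_eq_zero_of_natDegree_lt (by omega)
  have hrel : ∑ u ∈ Finset.range (m + 1), (f.coeff u : ℝ) * α ^ u = 0 := by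
    have h0 := Polynomial.aeval_eq_sum_range (p := f) α
    rw [hroot, hdeg] at h0
    calc ∑ u ∈ Finset.range (m + 1), (f.coeff u : ℝ) * α ^ u
        = ∑ u ∈ Finset.range (m + 1), f.coeff u • α ^ u := by
          apply Finset.sum_congr rfl
          intro u _
          rw [zsmul_eq_mul]
      _ = 0 := h0.symm
  -- extended coefficient functions
  set cc : ℕ → ℤ := fun s => if h : s < m then c ⟨s, h⟩ else 0 with hccdef
  set cc' : ℕ → ℤ := fun s => if h : s < m then c' ⟨s, h⟩ else 0 with hcc'def
  have hccb : ∀ s, |cc s| ≤ A := by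
    intro s; simp only [hccdef]; split
    · exact hcb _
    · simpa using hA
  have hcc'b : ∀ s, |cc' s| ≤ B := by
    intro s; simp only [hcc'def]; split
    · exact hcb' _
    · simpa using hB
  have hcc0 : ∀ s, m ≤ s → cc s = 0 := by
    intro s hs; simp only [hccdef]; rw [dif_neg (by omega)]
  have hcc'0 : ∀ s, m ≤ s → cc' s = 0 := by
    intro s hs; simp only [hcc'def]; rw [dif_neg (by omega)]
  -- polynomials
  set p : Polynomial ℤ := ∑ s ∈ Finset.range m, Polynomial.C (cc s) * Polynomial.X ^ s with hpdef
  set q : Polynomial ℤ := ∑ s ∈ Finset.range m, Polynomial.C (cc' s) * Polynomial.X ^ s with hqdef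
  have hpcoeff : ∀ u, p.coeff u = cc u := by
    intro u
    rw [hpdef, Polynomial.finset_sum_coeff]
    simp only [Polynomial.coeff_C_mul, Polynomial.coeff_X_pow, mul_ite, mul_one, mul_zero]
    rw [Finset.sum_ite_eq (Finset.range m) u cc]
    by_cases hu : u < m
    · rw [if_pos (Finset.mem_range.mpr hu)]
    · rw [if_neg (by simp [hu]), hcc0 u (by omega)]
  have hqcoeff : ∀ u, q.coeff u = cc' u := by
    intro u
    rw [hqdef, Polynomial.finset_sum_coeff]
    simp only [Polynomial.coeff_C_mul, Polynomial.coeff_X_pow, mul_ite, mul_one, mul_zero]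
    rw [Finset.sum_ite_eq (Finset.range m) u cc']
    by_cases hu : u < m
    · rw [if_pos (Finset.mem_range.mpr hu)]
    · rw [if_neg (by simp [hu]), hcc'0 u (by omega)]
  have hpd : p.natDegree ≤ m - 1 := by
    apply Polynomial.natDegree_le_iff_coeff_eq_zero.mpr
    intro N hN
    rw [hpcoeff]
    exact hcc0 N (by omega)
  have hqd : q.natDegree ≤ m - 1 := by
    apply Polynomial.natDegree_le_iff_coeff_eq_zero.mpr
    intro N hN
    rw [hqcoeff]
    exact hcc'0 N (by omega)
  have hpqd : (p * q).natDegree < m + (m - 1) := by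
    have := Polynomial.natDegree_mul_le (p := p) (q := q)
    omega
  -- value of aeval
  have hap : (Polynomial.aeval α) p = x := by
    rw [hpdef, map_sum, ← Fin.sum_univ_eq_sum_range
      (fun s => (Polynomial.aeval α) (Polynomial.C (cc s) * Polynomial.X ^ s)) m, ← hcv]
    apply Finset.sum_congr rfl
    intro t _
    simp only [map_mul, Polynomial.aeval_C, map_pow, Polynomial.aeval_X, eq_intCast, hccdef]
    rw [dif_pos t.isLt]
    simp
  have haq : (Polynomial.aeval α) q = y := by
    rw [hqdef, map_sum, ← Fin.sum_univ_eq_sum_range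
      (fun s => (Polynomial.aeval α) (Polynomial.C (cc' s) * Polynomial.X ^ s)) m, ← hcv']
    apply Finset.sum_congr rfl
    intro t _
    simp only [map_mul, Polynomial.aeval_C, map_pow, Polynomial.aeval_X, eq_intCast, hcc'def]
    rw [dif_pos t.isLt]
    simp
  set d : ℕ → ℤ := fun u => (p * q).coeff u with hddef
  have hdval : ∑ u ∈ Finset.range (m + (m - 1)), (d u : ℝ) * α ^ u = x * y := by
    have h0 := Polynomial.aeval_eq_sum_range' hpqd α
    rw [map_mul, hap, haq] at h0
    calc ∑ u ∈ Finset.range (m + (m - 1)), (d u : ℝ) * α ^ u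
        = ∑ u ∈ Finset.range (m + (m - 1)), (p * q).coeff u • α ^ u := by
          apply Finset.sum_congr rfl
          intro u _
          rw [zsmul_eq_mul, hddef]
      _ = x * y := h0.symm
  have hdb : ∀ u, |d u| ≤ (m : ℤ) * (A * B) := by
    intro u
    have hAB : (0 : ℤ) ≤ A * B := mul_nonneg hA hB
    rw [hddef]
    simp only
    rw [Polynomial.coeff_mul, Finset.Nat.sum_antidiagonal_eq_sum_range_succ_mk]
    calc |∑ s ∈ Finset.range (u + 1), p.coeff s * q.coeff (u - s)|
        ≤ ∑ s ∈ Finset.range (u + 1), |p.coeff s * q.coeff (u - s)| :=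
          Finset.abs_sum_le_sum_abs _ _
      _ ≤ ∑ s ∈ Finset.range (u + 1), (if s < m then A * B else 0) := by
          apply Finset.sum_le_sum
          intro s _
          by_cases hs : s < m
          · rw [if_pos hs, abs_mul, hpcoeff, hqcoeff]
            exact mul_le_mul (hccb s) (hcc'b (u - s)) (abs_nonneg _) hA
          · rw [if_neg hs, hpcoeff, hcc0 s (by omega)]
            simp
      _ = ∑ s ∈ (Finset.range (u + 1)).filter (· < m), (A * B) := by
          rw [Finset.sum_filter]
      _ = ((Finset.range (u + 1)).filter (· < m)).card • (A * B) := by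
          rw [Finset.sum_const]
      _ ≤ m • (A * B) := by
          apply nsmul_le_nsmul_left hAB
          calc ((Finset.range (u + 1)).filter (· < m)).card
              ≤ (Finset.range m).card := by
                apply Finset.card_le_card
                intro z hz
                rw [Finset.mem_filter] at hz
                exact Finset.mem_range.mpr hz.2
            _ = m := Finset.card_range m
      _ = (m : ℤ) * (A * B) := by rw [nsmul_eq_mul]
  have hds : ∀ u, m + (m - 1) ≤ u → d u = 0 := by
    intro u hu
    exact Polynomial.coeff_eq_zero_of_natDegree_lt (by omega)
  obtain ⟨e, he1, he2⟩ := reduce α m F hF (fun u => f.coeff u) hfm hfb hf0 hrel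
    (m - 1) d ((m : ℤ) * (A * B)) (by positivity) hdb hds
  refine ⟨fun t => e t, ?_, fun t => ?_⟩
  · rw [Fin.sum_univ_eq_sum_range (fun u => ((e u : ℤ) : ℝ) * α ^ u) m, he2, hdval]
  · calc |e (t : ℕ)| ≤ (m : ℤ) * (A * B) * (1 + F) ^ (m - 1) := he1 t
      _ = (m : ℤ) * (1 + F) ^ (m - 1) * A * B := by ring

/-- Product of `j'+1` Good elements. -/
lemma Good.prod {m : ℕ} {α : ℝ} {M E : ℤ} (hM : 0 ≤ M) (hE : 0 ≤ E)
    (Hmul : ∀ x y A B, 0 ≤ A → 0 ≤ B → Good m α x A → Good m α y B →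
      Good m α (x * y) (M * A * B)) :
    ∀ (j' : ℕ) (g : Fin (j' + 1) → ℝ), (∀ i, Good m α (g i) E) →
      Good m α (∏ i, g i) (M ^ j' * E ^ (j' + 1)) := by
  intro j'
  induction j' with
  | zero =>
    intro g hg
    simpa using hg 0
  | succ j' ih =>
    intro g hg
    rw [Fin.prod_univ_succ]
    have h1 := Hmul _ _ E (M ^ j' * E ^ (j' + 1)) hE (by positivity) (hg 0)
      (ih (fun i => g i.succ) (fun i => hg i.succ))
    refine h1.mono (le_of_eq ?_)
    ring

lemma good_to_goal {m : ℕ} {α x : ℝ} {B : ℤ} (h : Good m α x B) (hB : 0 ≤ B) :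
    ∃ c : Fin m → ℤ, (∑ t, (c t : ℝ) * α ^ (t : ℕ)) = x ∧
      ((Finset.univ.sup fun t => (c t).natAbs : ℕ) : ℤ) ≤ B := by
  obtain ⟨c, h1, h2⟩ := h
  refine ⟨c, h1, ?_⟩
  have hsup : (Finset.univ.sup fun t => (c t).natAbs) ≤ B.toNat := by
    apply Finset.sup_le
    intro t _
    rw [Int.le_toNat hB, ← Int.abs_eq_natAbs]
    exact h2 t
  calc ((Finset.univ.sup fun t => (c t).natAbs : ℕ) : ℤ) ≤ (B.toNat : ℤ) := by
        exact_mod_cast hsup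
    _ = B := Int.toNat_of_nonneg hB

/-- Determinant of a matrix with Good entries. -/
lemma Good.det {m : ℕ} {α : ℝ} {M E : ℤ} (hM : 0 ≤ M) (hE : 0 ≤ E)
    (Hmul : ∀ x y A B, 0 ≤ A → 0 ≤ B → Good m α x A → Good m α y B →
      Good m α (x * y) (M * A * B))
    (j' : ℕ) (Mx : Matrix (Fin (j' + 1)) (Fin (j' + 1)) ℝ)
    (hMx : ∀ p q, Good m α (Mx p q) E) :
    Good m α Mx.det (((j' + 1).factorial : ℤ) * (M ^ j' * E ^ (j' + 1))) := by
  rw [Matrix.det_apply']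
  have key : ∀ σ ∈ (Finset.univ : Finset (Equiv.Perm (Fin (j' + 1)))),
      Good m α (((Equiv.Perm.sign σ : ℤ) : ℝ) * ∏ i, Mx (σ i) i)
        (M ^ j' * E ^ (j' + 1)) := by
    intro σ _
    have hp : Good m α (∏ i, Mx (σ i) i) (M ^ j' * E ^ (j' + 1)) :=
      Good.prod hM hE Hmul j' (fun i => Mx (σ i) i) (fun i => hMx _ _)
    rcases Int.units_eq_one_or (Equiv.Perm.sign σ) with h | h <;> rw [h]
    · simpa using hp
    · push_cast
      rw [neg_one_mul]
      exact hp.neg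
  have := Good.sum (Finset.univ : Finset (Equiv.Perm (Fin (j' + 1))))
    (fun σ => ((Equiv.Perm.sign σ : ℤ) : ℝ) * ∏ i, Mx (σ i) i) (by positivity) key
  rw [Finset.card_univ, Fintype.card_perm, Fintype.card_fin] at this
  exact this

theorem stmt_16 (m : ℕ) (hm : 1 ≤ m) (f : Polynomial ℤ)
    (hmonic : f.Monic) (hdeg : f.natDegree = m)
    (hirr : Irreducible (f.map (Int.castRingHom ℚ)))
    (α : ℝ) (hroot : Polynomial.aeval α f = 0)
    (n : ℕ) (b : Fin n → Fin n → (Fin m → ℤ)) (C : ℤ)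
    (hC : ∀ i k, ((Finset.univ.sup fun t => (b i k t).natAbs : ℕ) : ℤ) ≤ C)
    (j : ℕ) (hj1 : 1 ≤ j) (hjn : j ≤ n) (i : Fin n) (hij : j ≤ (i : ℕ)) :
    (∃ c : Fin m → ℤ,
        (∑ t, (c t : ℝ) * α ^ (t : ℕ)) =
          (Matrix.of fun p q : Fin j =>
            ∑ k, coordVal m α (b (Fin.castLE hjn p) k) *
              coordVal m α (b (Fin.castLE hjn q) k)).det ∧
        ((Finset.univ.sup fun t => (c t).natAbs : ℕ) : ℤ) ≤
          (n : ℤ) ^ j * (j.factorial : ℤ) *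
            ((m : ℤ) * (1 + fninf m f) ^ (m - 1)) ^ (2 * j - 1) * C ^ (2 * j)) ∧
    ∃ c : Fin m → ℤ,
      (∑ t, (c t : ℝ) * α ^ (t : ℕ)) =
        (Matrix.of fun p q : Fin j =>
          if (q : ℕ) = j - 1 then
            ∑ k, coordVal m α (b (Fin.castLE hjn p) k) * coordVal m α (b i k)
          else
            ∑ k, coordVal m α (b (Fin.castLE hjn p) k) *
              coordVal m α (b (Fin.castLE hjn q) k)).det ∧
      ((Finset.univ.sup fun t => (c t).natAbs : ℕ) : ℤ) ≤
        (n : ℤ) ^ j * (j.factorial : ℤ) *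
          ((m : ℤ) * (1 + fninf m f) ^ (m - 1)) ^ (2 * j - 1) * C ^ (2 * j) := by
  set F : ℤ := fninf m f with hFdef
  have hF : 0 ≤ F := Int.natCast_nonneg _
  set M : ℤ := (m : ℤ) * (1 + F) ^ (m - 1) with hMdef
  have hM : 0 ≤ M := by positivity
  have hC0 : 0 ≤ C := le_trans (Int.natCast_nonneg _) (hC i i)
  have Hmul : ∀ x y A B, 0 ≤ A → 0 ≤ B → Good m α x A → Good m α y B →
      Good m α (x * y) (M * A * B) := by
    intro x y A B hA hB hx hy
    exact Good.mul hm hmonic hdeg hroot hA hB hx hy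
  -- each coordinate vector is Good
  have hbG : ∀ (i' : Fin n) (k : Fin n), Good m α (coordVal m α (b i' k)) C := by
    intro i' k
    refine ⟨b i' k, rfl, fun t => ?_⟩
    calc |b i' k t| = ((b i' k t).natAbs : ℤ) := Int.abs_eq_natAbs _
      _ ≤ ((Finset.univ.sup fun t => (b i' k t).natAbs : ℕ) : ℤ) := by
          exact_mod_cast Finset.le_sup (f := fun t => (b i' k t).natAbs) (Finset.mem_univ t)
      _ ≤ C := hC i' k
  set E : ℤ := (n : ℤ) * (M * C * C) with hEdef
  have hE : 0 ≤ E := by positivity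
  -- entries of both matrices are Good E
  have hentry : ∀ (v w : Fin m → ℤ),
      (∀ t, |v t| ≤ C) → (∀ t, |w t| ≤ C) → True := fun _ _ _ _ => trivial
  have hsumG : ∀ (g h : Fin n → Fin m → ℤ),
      (∀ k, Good m α (coordVal m α (g k)) C) → (∀ k, Good m α (coordVal m α (h k)) C) →
      Good m α (∑ k, coordVal m α (g k) * coordVal m α (h k)) E := by
    intro g h hg hh
    have := Good.sum (Finset.univ : Finset (Fin n))
      (fun k => coordVal m α (g k) * coordVal m α (h k)) (B := M * C * C)
      (by positivity) (fun k _ => by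
        have := Hmul _ _ C C hC0 hC0 (hg k) (hh k)
        exact this)
    rw [Finset.card_univ, Fintype.card_fin] at this
    exact this
  obtain ⟨j', rfl⟩ : ∃ j', j = j' + 1 := ⟨j - 1, by omega⟩
  have hbound : ((j' + 1).factorial : ℤ) * (M ^ j' * E ^ (j' + 1)) =
      (n : ℤ) ^ (j' + 1) * ((j' + 1).factorial : ℤ) * M ^ (2 * (j' + 1) - 1) * C ^ (2 * (j' + 1)) := by
    rw [show 2 * (j' + 1) - 1 = 2 * j' + 1 by omega, show 2 * (j' + 1) = 2 * j' + 2 by omega,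
      hEdef]
    ring
  have hBnn : 0 ≤ ((j' + 1).factorial : ℤ) * (M ^ j' * E ^ (j' + 1)) := by positivity
  constructor
  · -- first determinant
    have hdet := Good.det hM hE Hmul j'
      (Matrix.of fun p q : Fin (j' + 1) =>
        ∑ k, coordVal m α (b (Fin.castLE hjn p) k) * coordVal m α (b (Fin.castLE hjn q) k))
      (fun p q => hsumG _ _ (fun k => hbG _ k) (fun k => hbG _ k))
    obtain ⟨c, h1, h2⟩ := good_to_goal hdet hBnn
    exact ⟨c, h1, by rw [← hbound]; exact h2⟩
  · -- second determinant
    have hdet := Good.det hM hE Hmul j'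
      (Matrix.of fun p q : Fin (j' + 1) =>
        if (q : ℕ) = (j' + 1) - 1 then
          ∑ k, coordVal m α (b (Fin.castLE hjn p) k) * coordVal m α (b i k)
        else
          ∑ k, coordVal m α (b (Fin.castLE hjn p) k) * coordVal m α (b (Fin.castLE hjn q) k))
      (fun p q => by
        simp only [Matrix.of_apply]
        split
        · exact hsumG _ _ (fun k => hbG _ k) (fun k => hbG _ k)
        · exact hsumG _ _ (fun k => hbG _ k) (fun k => hbG _ k))
    obtain ⟨c, h1, h2⟩ := good_to_goal hdet hBnn
    exact ⟨c, h1, by rw [← hbound]; exact h2⟩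
end
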